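/- arXiv:2110.12052 — 3 statements merged into one kernel-verified Lean document; each statement's English description precedes it below -/
import Mathlib

section
/- Modularity/autonomy of interventions: in the truncated factorization setting, for any vertex i ∉ W and any joint configuration 𝐯 in the support with 𝐯_W = 𝐰, the conditional distribution of V_i given its parents under p_{do(𝐰)} equals the kernel p_i: that is, p_{do(𝐰)}(V_i = x | Pa(i) = c) = p_i(x | c) whenever the conditioning event has positive probability. -/
/-!
Summing over the value of a vertex `k` whose kernel is the only factor involving `v k` removes
that factor, since the kernel sums to one; the freed coordinate is then pinned to an arbitrary
value `r k` (left free, it would multiply the sum by the size of its domain). Removing the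
non-intervened vertices from `i` upwards in this way, top-down so that each is a sink of what
remains, turns numerator and denominator into the same sum up to the factor `p i x c`: on the
event `Pa(i) = c` the kernel of `i` is this constant in the numerator, while in the denominator
it is summed out as well.
-/

open Finset Function

section Marginalization

variable {ι : Type*} {D : ι → Type*}

theorem dependsOn_forall_mem_eq (T : Finset ι) (c : ∀ j, D j) :
    DependsOn (fun v => ∀ j ∈ T, v j = c j) T := fun _ _ h =>
  propext <| forall₂_congr fun j hj => by rw [h j hj]

variable [DecidableEq ι]

theorem DependsOn.apply_update_of_notMem {β : Type*} {f : (∀ j, D j) → β} {s : Set ι}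
    (hf : DependsOn f s) {k : ι} (hk : k ∉ s) (v : ∀ j, D j) (y : D k) :
    f (Function.update v k y) = f v :=
  hf fun _ hl => update_of_ne (ne_of_mem_of_not_mem hl hk) y v

variable [Fintype ι] [∀ i, Fintype (D i)] [∀ i, DecidableEq (D i)]

theorem sum_eq_sum_filter_sum_update {M : Type*} [AddCommMonoid M] (F : (∀ j, D j) → M)
    (k : ι) (y₀ : D k) :
    ∑ v, F v = ∑ v with v k = y₀, ∑ y, F (update v k y) := by
  rw [← Finset.sum_fiberwise univ (fun v => v k), Finset.sum_comm]
  refine Finset.sum_congr rfl fun y _ => ?_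
  refine Finset.sum_nbij' (update · k y₀) (update · k y) ?_ ?_ ?_ ?_ ?_ <;>
    simp_all [update_idem]
  rintro v rfl
  rw [update_eq_self]

theorem sum_kernel_mul_eq_sum_filter {k : ι} (q : D k → (∀ j, D j) → ℝ)
    (hq : ∀ y, DependsOn (q y) {k}ᶜ) (hq₁ : ∀ v, ∑ y, q y v = 1)
    {G : (∀ j, D j) → ℝ} (hG : DependsOn G {k}ᶜ) (y₀ : D k) :
    ∑ v, q (v k) v * G v = ∑ v with v k = y₀, G v := by
  rw [sum_eq_sum_filter_sum_update _ k y₀]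
  refine Finset.sum_congr rfl fun v _ => ?_
  have hk : k ∉ ({k}ᶜ : Set ι) := by simp
  simp only [update_self, fun y => (hq y).apply_update_of_notMem hk v,
    hG.apply_update_of_notMem hk, ← Finset.sum_mul, hq₁, one_mul]

end Marginalization

section Factorization

variable {ι : Type*} [LinearOrder ι] [Fintype ι] {D : ι → Type*} [∀ i, Fintype (D i)]
  [∀ i, DecidableEq (D i)] {pa : ι → Finset ι} {p : (i : ι) → D i → (∀ j, D j) → ℝ}

theorem sum_mul_prod_kernel_eq_sum_filter (htopo : ∀ i, ∀ j ∈ pa i, j < i)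
    (hlocal : ∀ i x, DependsOn (p i x) (pa i)) (hnorm : ∀ i v, ∑ x, p i x v = 1)
    (r : ∀ j, D j) {A : Finset ι} (B : Finset ι) (hBA : B ⊆ A)
    (hB : ∀ j ∈ A \ B, ∀ b ∈ B, b ∉ pa j) {G : (∀ j, D j) → ℝ}
    (hG : DependsOn G (↑B)ᶜ) :
    ∑ v, G v * ∏ j ∈ A, p j (v j) v =
      ∑ v with ∀ j ∈ B, v j = r j, G v * ∏ j ∈ A \ B, p j (v j) v := by
  induction B using Finset.induction_on_min generalizing G with
  | empty => simp
  | insert a s has ih =>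
    have haA : a ∈ A \ s :=
      mem_sdiff.2 ⟨hBA (mem_insert_self a s), fun h => lt_irrefl a (has a h)⟩
    have hsa : ∀ j ∈ s, j ≠ a := fun j hj => (has j hj).ne'
    rw [ih ((subset_insert a s).trans hBA) ?closed
      (hG.mono (Set.compl_subset_compl.2 (by simp)))]
    case closed =>
      intro j hj b hb hbj
      rcases eq_or_ne j a with rfl | hja
      · exact lt_asymm (has b hb) (htopo j b hbj)
      · exact hB j (by simp_all) b (mem_insert_of_mem hb) hbj
    have hGa : DependsOn G {a}ᶜ := hG.mono (Set.compl_subset_compl.2 (by simp))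
    set R : (∀ j, D j) → ℝ := fun v => ∏ j ∈ A \ insert a s, p j (v j) v
    have hR : DependsOn R {a}ᶜ := by
      intro v v' h
      refine prod_congr rfl fun j hj => ?_
      have hja : j ≠ a := by simp_all
      rw [h j hja]
      exact hlocal j _ fun l hl => h l fun hla => hB j hj a (mem_insert_self a s) (hla ▸ hl)
    have hG' : DependsOn (fun v => if ∀ j ∈ s, v j = r j then G v * R v else 0) {a}ᶜ := by
      intro v v' h
      simp only [dependsOn_forall_mem_eq s r fun j hj => h j (hsa j hj), hR h, hGa h]
    have hker : ∀ y, DependsOn (p a y) {a}ᶜ := fun y =>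
      (hlocal a y).mono fun l hl => (htopo a l hl).ne
    have hsplit : ∀ v, ∏ j ∈ A \ s, p j (v j) v = p a (v a) v * R v := fun v => by
      rw [← mul_prod_erase _ _ haA, ← sdiff_insert]
    calc ∑ v with ∀ j ∈ s, v j = r j, G v * ∏ j ∈ A \ s, p j (v j) v
        = ∑ v, p a (v a) v * (if ∀ j ∈ s, v j = r j then G v * R v else 0) := by
          rw [sum_filter]
          refine sum_congr rfl fun v _ => ?_
          rw [hsplit]
          split_ifs <;> ring
      _ = ∑ v with v a = r a, (if ∀ j ∈ s, v j = r j then G v * R v else 0) :=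
          sum_kernel_mul_eq_sum_filter (p a) hker (hnorm a) hG' (r a)
      _ = ∑ v with ∀ j ∈ insert a s, v j = r j, G v * R v := by
          rw [sum_filter, sum_filter]
          simp only [forall_mem_insert, ite_and]

theorem sum_filter_apply_and_parents_eq_kernel_mul
    (hlocal : ∀ i x, DependsOn (p i x) (pa i)) {A : Finset ι} {i : ι} (hi : i ∈ A)
    (x : D i) (c : ∀ j, D j) (H : (∀ j, D j) → ℝ) :
    ∑ v with v i = x ∧ ∀ j ∈ pa i, v j = c j, H v * ∏ j ∈ A, p j (v j) v =
      p i x c *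
        ∑ v with v i = x ∧ ∀ j ∈ pa i, v j = c j, H v * ∏ j ∈ A.erase i, p j (v j) v := by
  rw [mul_sum]
  refine sum_congr rfl fun v hv => ?_
  obtain ⟨hx, hc⟩ := (mem_filter.1 hv).2
  have hpi : p i x v = p i x c := hlocal i x fun j hj => hc j hj
  rw [← mul_prod_erase _ _ hi, hx, hpi]
  ring

theorem sum_filter_apply_and_parents_eq (htopo : ∀ i, ∀ j ∈ pa i, j < i)
    (hlocal : ∀ i x, DependsOn (p i x) (pa i)) (hnorm : ∀ i v, ∑ x, p i x v = 1)
    {A : Finset ι} {i : ι} (hi : i ∈ A) (x : D i) (c : ∀ j, D j) {H : (∀ j, D j) → ℝ}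
    (hH : DependsOn H {j | j ∈ A → j < i}) :
    ∑ v with v i = x ∧ ∀ j ∈ pa i, v j = c j, H v * ∏ j ∈ A, p j (v j) v =
      p i x c * ∑ v with ∀ j ∈ pa i, v j = c j, H v * ∏ j ∈ A, p j (v j) v := by
  set B := A.filter (i ≤ ·)
  set B' := (A.erase i).filter (i < ·)
  have hB : B = insert i B' := by
    ext j
    simp only [B, B', mem_filter, mem_insert, mem_erase]
    grind
  have hAB : A.erase i \ B' = A \ B := by rw [hB, sdiff_insert, erase_sdiff_comm]
  have hclosed : ∀ j ∈ A \ B, ∀ b, i ≤ b → b ∉ pa j := fun j hj b hb hbj => by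
    simp only [B, mem_sdiff, mem_filter, not_and, not_le] at hj
    exact lt_asymm (htopo j b hbj) ((hj.2 hj.1).trans_le hb)
  have hBc : ∀ j, (j ∈ A → j < i) → j ∉ B := fun j hj => by simpa [B] using hj
  have hB'c : ∀ j, (j ∈ A → j < i) → j ∉ B' := fun j hj hjB' =>
    hBc j hj (hB ▸ mem_insert_of_mem hjB')
  have hpa : ∀ j ∈ pa i, j ∈ A → j < i := fun j hj _ => htopo i j hj
  have hGc : DependsOn (fun v => if ∀ j ∈ pa i, v j = c j then H v else 0) (↑B)ᶜ :=
    fun v v' h => by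
      simp only [hH fun l hl => h l (hBc l hl),
        dependsOn_forall_mem_eq (pa i) c fun j hj => h j (hBc j (hpa j hj))]
  have hGx :
      DependsOn (fun v => if v i = x ∧ ∀ j ∈ pa i, v j = c j then H v else 0) (↑B')ᶜ :=
    fun v v' h => by
      simp only [h i (by simp [B']), hH fun l hl => h l (hB'c l hl),
        dependsOn_forall_mem_eq (pa i) c fun j hj => h j (hB'c j (hpa j hj))]
  set r := Function.update c i x
  rw [sum_filter_apply_and_parents_eq_kernel_mul hlocal hi, sum_filter, sum_filter]
  simp only [← ite_zero_mul]
  rw [sum_mul_prod_kernel_eq_sum_filter htopo hlocal hnorm r B' (filter_subset _ _)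
      (fun j hj b hb => hclosed j (hAB ▸ hj) b (mem_filter.1 hb).2.le) hGx,
    sum_mul_prod_kernel_eq_sum_filter htopo hlocal hnorm r B (filter_subset _ _)
      (fun j hj b hb => hclosed j hj b (mem_filter.1 hb).2) hGc,
    hAB, hB, sum_filter, sum_filter]
  congr 1
  refine sum_congr rfl fun v _ => ?_
  simp only [forall_mem_insert, r, update_self]
  split_ifs <;> simp_all

end Factorization

theorem intervention_modularity_general
    (n : ℕ) (D : Fin n → Type) [∀ i, Fintype (D i)]
    [∀ i, DecidableEq (D i)]
    (pa : Fin n → Finset (Fin n))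
    (htopo : ∀ i, ∀ j ∈ pa i, j < i)
    (p : (i : Fin n) → D i → ((j : Fin n) → D j) → ℝ)
    (hlocal : ∀ i x v w, (∀ j ∈ pa i, v j = w j) → p i x v = p i x w)
    (hnorm : ∀ i v, ∑ x : D i, p i x v = 1)
    (W : Finset (Fin n)) (w : (i : Fin n) → D i)
    -- the interventional (truncated-factorization) distribution
    (pdo : ((i : Fin n) → D i) → ℝ)
    (hpdo : ∀ v, pdo v =
      (∏ i ∈ Wᶜ, p i (v i) v) * (if ∀ i ∈ W, v i = w i then 1 else 0))
    (i : Fin n) (hiW : i ∉ W) (x : D i) (c : (j : Fin n) → D j)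
    (hpos :
      0 < ∑ v ∈ univ.filter (fun v : (j : Fin n) → D j => ∀ j ∈ pa i, v j = c j),
            pdo v) :
    (∑ v ∈ univ.filter
        (fun v : (j : Fin n) → D j => v i = x ∧ ∀ j ∈ pa i, v j = c j), pdo v) /
      (∑ v ∈ univ.filter
        (fun v : (j : Fin n) → D j => ∀ j ∈ pa i, v j = c j), pdo v)
      = p i x c := by
  set ψ : ((j : Fin n) → D j) → ℝ := fun v => if ∀ j ∈ W, v j = w j then 1 else 0
  have hψ : DependsOn ψ {j | j ∈ Wᶜ → j < i} := fun v v' h => by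
    simp only [ψ, dependsOn_forall_mem_eq W w fun j hj =>
      h j fun hjW => absurd hj (mem_compl.1 hjW)]
  have hpdo' : ∀ v, pdo v = ψ v * ∏ j ∈ Wᶜ, p j (v j) v := fun v => by rw [hpdo, mul_comm]
  simp only [hpdo'] at hpos ⊢
  rw [div_eq_iff hpos.ne']
  -- `convert` reconciles the decidability instances of the filters, found differently on `Fin n`
  convert sum_filter_apply_and_parents_eq htopo (fun i x _ _ => hlocal i x _ _) hnorm
    (mem_compl.2 hiW) x c hψ

/-- Modularity/autonomy of interventions.  In the truncated
factorization setting, for any non-intervened vertex `i ∉ W`, the conditional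
distribution of `V i` given its parents under `p_{do(𝐰)}` equals the original
kernel `p i`: whenever the conditioning event `Pa(i) = c` has positive
interventional probability, `p_{do(𝐰)}(V i = x ∣ Pa(i) = c) = p i (x ∣ c)`. -/
theorem intervention_modularity
    (n : ℕ) (D : Fin n → Type) [∀ i, Fintype (D i)] [∀ i, Nonempty (D i)]
    [∀ i, DecidableEq (D i)]
    (pa : Fin n → Finset (Fin n))
    (htopo : ∀ i, ∀ j ∈ pa i, j < i)
    (p : (i : Fin n) → D i → ((j : Fin n) → D j) → ℝ)
    (hnonneg : ∀ i x v, 0 ≤ p i x v)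
    (hlocal : ∀ i x v w, (∀ j ∈ pa i, v j = w j) → p i x v = p i x w)
    (hnorm : ∀ i v, ∑ x : D i, p i x v = 1)
    (W : Finset (Fin n)) (w : (i : Fin n) → D i)
    -- the interventional (truncated-factorization) distribution
    (pdo : ((i : Fin n) → D i) → ℝ)
    (hpdo : ∀ v, pdo v =
      (∏ i ∈ Wᶜ, p i (v i) v) * (if ∀ i ∈ W, v i = w i then 1 else 0))
    (i : Fin n) (hiW : i ∉ W) (x : D i) (c : (j : Fin n) → D j)
    (hpos :
      0 < ∑ v ∈ univ.filter (fun v : (j : Fin n) → D j => ∀ j ∈ pa i, v j = c j),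
            pdo v) :
    (∑ v ∈ univ.filter
        (fun v : (j : Fin n) → D j => v i = x ∧ ∀ j ∈ pa i, v j = c j), pdo v) /
      (∑ v ∈ univ.filter
        (fun v : (j : Fin n) → D j => ∀ j ∈ pa i, v j = c j), pdo v)
      = p i x c :=
  intervention_modularity_general n D pa htopo p hlocal hnorm W w pdo hpdo i hiW x c hpos
end

section
/- An SPN with sum nodes whose weights at each sum node are nonnegative and sum to one, and whose leaves are normalized distributions, computes a value S(x) ≥ 0 for every input; moreover, under completeness and decomposability the root computes a normalized probability mass function: ∑_x S(x) = 1. -/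
open Finset

/-- A sum-product network over variables `Fin n` with finite domains `D i`:
a leaf carries a distribution over a single variable, a product node combines
two sub-circuits, and a sum node takes a weighted combination of two
sub-circuits. -/
inductive SPN (n : ℕ) (D : Fin n → Type) where
  | leaf (i : Fin n) (f : D i → ℝ)
  | prod (l r : SPN n D)
  | sum (w₁ w₂ : ℝ) (l r : SPN n D)

namespace SPN

variable {n : ℕ} {D : Fin n → Type}

/-- The scope of a node (equation (2) of the paper). -/
def scope : SPN n D → Finset (Fin n)
  | leaf i _ => {i}
  | prod l r => scope l ∪ scope r
  | sum _ _ l r => scope l ∪ scope r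

/-- Bottom-up evaluation of the circuit on a joint assignment. -/
def eval : SPN n D → ((i : Fin n) → D i) → ℝ
  | leaf i f, x => f (x i)
  | prod l r, x => eval l x * eval r x
  | sum w₁ w₂ l r, x => w₁ * eval l x + w₂ * eval r x

/-- Validity: leaves are normalized distributions, product nodes are
decomposable (disjoint child scopes), and sum nodes are complete (equal child
scopes) with nonnegative weights summing to one. -/
def valid [∀ i, Fintype (D i)] : SPN n D → Prop
  | leaf _ f => (∀ x, 0 ≤ f x) ∧ ∑ x, f x = 1
  | prod l r => valid l ∧ valid r ∧ Disjoint (scope l) (scope r)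
  | sum w₁ w₂ l r => valid l ∧ valid r ∧ 0 ≤ w₁ ∧ 0 ≤ w₂ ∧ w₁ + w₂ = 1 ∧
      scope l = scope r

end SPN

/-!
Write `N` for the number of joint assignments. By induction on the circuit,
`(∑ₓ S x) · ∏_{i ∈ scope S} |D i| = N`; stated multiplicatively, this also holds when some
domain is empty. Leaves are normalized and sum nodes are convex combinations of children with
a common scope. At a product node, decomposability makes the factors depend on disjoint sets
of coordinates, hence independent under the uniform distribution: `(∑ F)(∑ G) = N · ∑ F G`.
This follows from the involution of pairs of assignments `(x, y)` that swaps their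
coordinates in the scope of `F`. When the scope is everything, every domain carries a leaf,
so `N ≠ 0` and the sum is `1`.
-/

theorem Fintype.sum_mul_sum_of_dependsOn {ι R : Type*} [Fintype ι] [DecidableEq ι]
    {α : ι → Type*} [∀ i, Fintype (α i)] [CommSemiring R]
    {s : Set ι} [DecidablePred (· ∈ s)] {F G : (Π i, α i) → R}
    (hF : DependsOn F s) (hG : DependsOn G sᶜ) :
    (∑ x, F x) * ∑ y, G y = (∑ x, F x * G x) * Fintype.card (Π i, α i) := by
  have hswap : Function.Involutive fun p : (Π i, α i) × (Π i, α i) ↦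
      (s.piecewise p.1 p.2, s.piecewise p.2 p.1) := by
    rintro ⟨x, y⟩
    ext i <;> by_cases hi : i ∈ s <;> simp [hi]
  calc (∑ x, F x) * ∑ y, G y = ∑ p : (Π i, α i) × (Π i, α i), F p.1 * G p.2 := by
        rw [Finset.sum_mul_sum, Fintype.sum_prod_type]
    _ = ∑ p : (Π i, α i) × (Π i, α i), F p.1 * G p.1 := by
        refine Fintype.sum_equiv hswap.toPerm _ _ fun p ↦ ?_
        simp only [Function.Involutive.coe_toPerm]
        congr 1
        · exact hF fun i hi ↦ by simp [hi]
        · exact hG fun i hi ↦ by simp [Set.notMem_of_mem_compl hi]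
    _ = (∑ x, F x * G x) * Fintype.card (Π i, α i) := by
        simp only [Fintype.sum_prod_type, Finset.sum_const, Finset.card_univ, nsmul_eq_mul]
        rw [← Finset.mul_sum, mul_comm]

theorem Fintype.sum_comp_eval_mul_card {ι R : Type*} [Fintype ι] [DecidableEq ι]
    {α : ι → Type*} [∀ i, Fintype (α i)] [CommSemiring R] (i : ι) (f : α i → R) :
    (∑ x : Π j, α j, f (x i)) * Fintype.card (α i) =
      (∑ v, f v) * Fintype.card (Π j, α j) := by
  rw [← (Equiv.piSplitAt i α).symm.sum_comp, Fintype.sum_prod_type,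
    Fintype.card_congr (Equiv.piSplitAt i α), Fintype.card_prod]
  simp [Finset.sum_mul, Finset.mul_sum, mul_comm, mul_left_comm]

namespace SPN

variable {n : ℕ} {D : Fin n → Type}

theorem dependsOn_eval (S : SPN n D) : DependsOn S.eval (S.scope : Set (Fin n)) := by
  induction S with
  | leaf i f => exact fun x y h ↦ congrArg f (h i (by simp [scope]))
  | prod l r ihl ihr =>
    exact fun x y h ↦ congrArg₂ (· * ·) (ihl fun i hi ↦ h i (by simp [scope, hi]))
      (ihr fun i hi ↦ h i (by simp [scope, hi]))
  | sum w₁ w₂ l r ihl ihr =>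
    exact fun x y h ↦ congrArg₂ (w₁ * · + w₂ * ·)
      (ihl fun i hi ↦ h i (by simp [scope, hi])) (ihr fun i hi ↦ h i (by simp [scope, hi]))

variable [∀ i, Fintype (D i)]

theorem eval_nonneg {S : SPN n D} (hS : S.valid) (x : (i : Fin n) → D i) : 0 ≤ S.eval x := by
  induction S with
  | leaf i f => exact hS.1 (x i)
  | prod l r ihl ihr => exact mul_nonneg (ihl hS.1) (ihr hS.2.1)
  | sum w₁ w₂ l r ihl ihr =>
    obtain ⟨hl, hr, hw₁, hw₂, -⟩ := hS
    exact add_nonneg (mul_nonneg hw₁ (ihl hl)) (mul_nonneg hw₂ (ihr hr))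

theorem nonempty_of_mem_scope {S : SPN n D} (hS : S.valid) {i : Fin n} (hi : i ∈ S.scope) :
    Nonempty (D i) := by
  induction S with
  | leaf j f =>
    obtain rfl : i = j := Finset.mem_singleton.mp hi
    have hsum : ∑ v, f v ≠ 0 := hS.2.symm ▸ one_ne_zero
    exact Finset.univ_nonempty_iff.mp (Finset.nonempty_of_sum_ne_zero hsum)
  | prod l r ihl ihr =>
    exact (Finset.mem_union.mp hi).elim (ihl hS.1) (ihr hS.2.1)
  | sum w₁ w₂ l r ihl ihr =>
    exact (Finset.mem_union.mp hi).elim (ihl hS.1) (ihr hS.2.1)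

theorem sum_eval_mul_prod_card_scope {S : SPN n D} (hS : S.valid) :
    (∑ x, S.eval x) * ∏ i ∈ S.scope, (Fintype.card (D i) : ℝ) =
      Fintype.card ((i : Fin n) → D i) := by
  induction S with
  | leaf i f =>
    simpa [eval, scope, hS.2] using Fintype.sum_comp_eval_mul_card (R := ℝ) i f
  | prod l r ihl ihr =>
    obtain ⟨hl, hr, hdisj⟩ := hS
    rcases isEmpty_or_nonempty ((i : Fin n) → D i) with hempty | hnonempty
    · simp
    have hr_indep : DependsOn r.eval (↑l.scope)ᶜ :=
      r.dependsOn_eval.mono (Finset.disjoint_coe.mpr hdisj).le_compl_left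
    have hN : (Fintype.card ((i : Fin n) → D i) : ℝ) ≠ 0 :=
      Nat.cast_ne_zero.mpr Fintype.card_ne_zero
    refine mul_right_cancel₀ hN ?_
    simp only [eval, scope, Finset.prod_union hdisj]
    calc (∑ x, l.eval x * r.eval x) *
          ((∏ i ∈ l.scope, (Fintype.card (D i) : ℝ)) *
            ∏ i ∈ r.scope, (Fintype.card (D i) : ℝ)) * Fintype.card ((i : Fin n) → D i)
        = ((∑ x, l.eval x) * ∏ i ∈ l.scope, (Fintype.card (D i) : ℝ)) *
            ((∑ x, r.eval x) * ∏ i ∈ r.scope, (Fintype.card (D i) : ℝ)) := by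
          rw [mul_mul_mul_comm, Fintype.sum_mul_sum_of_dependsOn l.dependsOn_eval hr_indep]
          ring
      _ = Fintype.card ((i : Fin n) → D i) * Fintype.card ((i : Fin n) → D i) := by
          rw [ihl hl, ihr hr]
  | sum w₁ w₂ l r ihl ihr =>
    obtain ⟨hl, hr, -, -, hw, hlr⟩ := hS
    simp only [eval, scope, ← hlr, Finset.union_self, Finset.sum_add_distrib, ← Finset.mul_sum]
    rw [add_mul, mul_assoc, mul_assoc, ihl hl, hlr, ihr hr, ← add_mul, hw, one_mul]

end SPN

/-- A complete, decomposable SPN with normalized weights and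
normalized leaves computes a nonnegative value on every input, and if its
scope covers all variables then it computes a normalized probability mass
function: `∑ x, S(x) = 1`. -/
theorem spn_nonneg_and_normalized
    (n : ℕ) (D : Fin n → Type) [∀ i, Fintype (D i)]
    (S : SPN n D) (hS : S.valid) :
    (∀ x : (i : Fin n) → D i, 0 ≤ S.eval x) ∧
    (S.scope = Finset.univ → ∑ x : (i : Fin n) → D i, S.eval x = 1) := by
  refine ⟨SPN.eval_nonneg hS, fun huniv ↦ ?_⟩
  have : ∀ i, Nonempty (D i) := fun i ↦
    SPN.nonempty_of_mem_scope hS (huniv ▸ Finset.mem_univ i)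
  have hcard : (Fintype.card ((i : Fin n) → D i) : ℝ) ≠ 0 :=
    Nat.cast_ne_zero.mpr Fintype.card_ne_zero
  have h := SPN.sum_eval_mul_prod_card_scope hS
  rw [huniv, ← Nat.cast_prod, ← Fintype.card_pi] at h
  exact (mul_eq_right₀ hcard).mp h
end

section
/- Any conditional query p(y | x) derived from a decomposable, complete, normalized SPN over variables V = Y ∪ X ∪ R is computable as a ratio of two circuit evaluations, each obtainable in linear time via leaf-marginalization, provided the denominator ∑_{y', r} S(x, y', r) is positive. -/
open Finset

namespace SPN

variable {n : ℕ} {D : Fin n → Type}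

/-- Leaf-marginalization of the variables in `M`. -/
def marg (M : Finset (Fin n)) : SPN n D → SPN n D
  | leaf i f => if i ∈ M then leaf i (fun _ => 1) else leaf i f
  | prod l r => prod (marg M l) (marg M r)
  | sum w₁ w₂ l r => sum w₁ w₂ (marg M l) (marg M r)

end SPN

/-!
Leaf-marginalization replaces a leaf distribution by the constant `1`, which is what summing the
leaf variable out does, since leaves are normalized. Summing out variables commutes with sum
nodes by linearity (completeness: both children range over the same variables) and factorizes
over product nodes (decomposability: the children read disjoint variables). By induction,
evaluating the marginalized circuit at `v` sums `S` over all completions of the marginalized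
variables, and the numerator and denominator of the query are two such marginals.
-/

namespace SPN

variable {n : ℕ} {D : Fin n → Type}

theorem eval_congr (T : SPN n D) {w w' : (i : Fin n) → D i}
    (h : ∀ i ∈ T.scope, w i = w' i) : T.eval w = T.eval w' := by
  induction T with
  | leaf i f => exact congrArg f (h i (mem_singleton_self i))
  | prod l r ihl ihr | sum _ _ l r ihl ihr =>
    simp only [eval]
    rw [ihl fun i hi => h i (mem_union_left _ hi), ihr fun i hi => h i (mem_union_right _ hi)]

variable [∀ i, Fintype (D i)] [∀ i, DecidableEq (D i)]

def agreeOutside (v : (i : Fin n) → D i) (M : Finset (Fin n)) : Finset ((i : Fin n) → D i) :=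
  univ.filter fun w => ∀ i ∉ M, w i = v i

theorem agreeOutside_eq_filter_compl (v : (i : Fin n) → D i) (M : Finset (Fin n)) :
    agreeOutside v M = univ.filter fun w => ∀ i ∈ Mᶜ, w i = v i := by
  simp only [agreeOutside, mem_compl]

@[simp]
theorem mem_agreeOutside {v w : (i : Fin n) → D i} {M : Finset (Fin n)} :
    w ∈ agreeOutside v M ↔ ∀ i ∉ M, w i = v i := by
  simp [agreeOutside]

theorem agreeOutside_empty (v : (i : Fin n) → D i) : agreeOutside v ∅ = {v} := by
  ext w
  simp [funext_iff]

theorem sum_agreeOutside_singleton (v : (i : Fin n) → D i) (j : Fin n) (f : D j → ℝ) :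
    ∑ w ∈ agreeOutside v {j}, f (w j) = ∑ x, f x := by
  refine sum_nbij' (fun w => w j) (Function.update v j) (by simp) ?_ ?_ (by simp) (by simp)
  · intro x _
    simp +contextual [Function.update_of_ne]
  · intro w hw
    ext i
    by_cases hij : i = j
    · subst hij; simp
    · simp_all [Function.update_of_ne]

theorem sum_agreeOutside_mul (v : (i : Fin n) → D i) (M s : Finset (Fin n))
    (f g : ((i : Fin n) → D i) → ℝ)
    (hf : ∀ w w', (∀ i ∈ s, w i = w' i) → f w = f w')
    (hg : ∀ w w', (∀ i ∉ s, w i = w' i) → g w = g w') :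
    ∑ w ∈ agreeOutside v M, f w * g w =
      (∑ w ∈ agreeOutside v (M ∩ s), f w) * ∑ w ∈ agreeOutside v (M \ s), g w := by
  rw [sum_mul_sum, ← sum_product']
  refine sum_nbij' (fun w => (s.piecewise w v, s.piecewise v w)) (fun p => s.piecewise p.1 p.2)
    ?_ ?_ ?_ ?_ ?_
  · intro w hw
    simp only [mem_product, mem_agreeOutside] at hw ⊢
    constructor <;> intro i hi <;> by_cases his : i ∈ s <;> simp_all [Finset.piecewise]
  · intro p hp
    simp only [mem_product, mem_agreeOutside] at hp ⊢
    intro i hi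
    by_cases his : i ∈ s <;> simp_all [Finset.piecewise]
  · intro w _
    ext i
    by_cases his : i ∈ s <;> simp [his]
  · intro p hp
    simp only [mem_product, mem_agreeOutside] at hp
    ext i <;> by_cases his : i ∈ s <;> simp_all [Finset.piecewise]
  · intro w _
    exact congrArg₂ (· * ·) (hf _ _ fun i hi => by simp [hi])
      (hg _ _ fun i hi => by simp [hi])

/-- Intersecting `M` with the scope keeps variables that `T` does not read from contributing a
factor `Fintype.card (D j)` each. -/
theorem sum_eval_eq_eval_marg {T : SPN n D} (hT : T.valid) (M : Finset (Fin n))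
    (v : (i : Fin n) → D i) :
    ∑ w ∈ agreeOutside v (M ∩ T.scope), T.eval w = (T.marg M).eval v := by
  induction T with
  | leaf i f =>
    rw [scope]
    by_cases hi : i ∈ M
    · rw [inter_eq_right.mpr (singleton_subset_iff.mpr hi)]
      simp [eval, marg, hi, sum_agreeOutside_singleton, hT.2]
    · rw [inter_singleton_of_notMem hi, agreeOutside_empty]
      simp [eval, marg, hi]
  | prod l r ihl ihr =>
    obtain ⟨hl, hr, hdisj⟩ := hT
    have hleft : M ∩ (l.scope ∪ r.scope) ∩ l.scope = M ∩ l.scope := by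
      rw [inter_assoc, union_inter_cancel_left]
    have hright : (M ∩ (l.scope ∪ r.scope)) \ l.scope = M ∩ r.scope := by
      rw [inter_sdiff_assoc, union_sdiff_left, hdisj.symm.sdiff_eq_left]
    rw [scope, marg]
    simp only [eval]
    rw [sum_agreeOutside_mul v _ l.scope _ _ (fun _ _ ↦ l.eval_congr)
      (fun _ _ h ↦ r.eval_congr fun i hi ↦ h i (disjoint_right.mp hdisj hi)),
      hleft, hright, ihl hl, ihr hr]
  | sum w₁ w₂ l r ihl ihr =>
    obtain ⟨hl, hr, -, -, -, hscope⟩ := hT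
    simp only [eval, marg, scope, sum_add_distrib, ← mul_sum, ← ihl hl, ← ihr hr, hscope,
      union_self]

end SPN

theorem spn_conditional_query_general
    (n : ℕ) (D : Fin n → Type) [∀ i, Fintype (D i)] [∀ i, DecidableEq (D i)]
    (S : SPN n D) (hS : S.valid) (hscope : S.scope = Finset.univ)
    (Ys Xs Rs : Finset (Fin n))
    (hYX : Disjoint Ys Xs) (hYR : Disjoint Ys Rs) (hXR : Disjoint Xs Rs)
    (hcover : Ys ∪ Xs ∪ Rs = Finset.univ)
    (v : (i : Fin n) → D i) :
    (S.marg Rs).eval v / (S.marg (Ys ∪ Rs)).eval v =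
      (∑ w ∈ univ.filter (fun w : (i : Fin n) → D i => ∀ i ∈ Xs ∪ Ys, w i = v i),
          S.eval w) /
      (∑ w ∈ univ.filter (fun w : (i : Fin n) → D i => ∀ i ∈ Xs, w i = v i),
          S.eval w) := by
  have hRs : Rsᶜ = Xs ∪ Ys := by
    refine IsCompl.compl_eq ⟨disjoint_union_right.mpr ⟨hXR.symm, hYR.symm⟩, ?_⟩
    rw [codisjoint_iff, top_eq_univ, ← hcover, sup_eq_union]
    ac_rfl
  have hYRs : (Ys ∪ Rs)ᶜ = Xs := by
    refine IsCompl.compl_eq ⟨disjoint_union_left.mpr ⟨hYX, hXR.symm⟩, ?_⟩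
    rw [codisjoint_iff, top_eq_univ, ← hcover, sup_eq_union]
    ac_rfl
  rw [← S.sum_eval_eq_eval_marg hS, ← S.sum_eval_eq_eval_marg hS, hscope, inter_univ, inter_univ,
    SPN.agreeOutside_eq_filter_compl, SPN.agreeOutside_eq_filter_compl, hRs, hYRs]

/-- Conditional queries from an SPN as a ratio of two linear-time
circuit evaluations.  For a valid SPN `S` over `V = Ys ∪ Xs ∪ Rs` (a partition)
and a joint assignment `v`, the ratio of the two leaf-marginalized circuit
evaluations `p(y∣x) = (∑_r S(x,y,r)) / (∑_{y',r} S(x,y',r))` — each a single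
evaluation of a marginalized circuit — equals the conditional probability of
`Y = v|_Ys` given `X = v|_Xs` under the joint distribution computed by `S`,
provided the denominator is positive. -/
theorem spn_conditional_query
    (n : ℕ) (D : Fin n → Type) [∀ i, Fintype (D i)] [∀ i, DecidableEq (D i)]
    (S : SPN n D) (hS : S.valid) (hscope : S.scope = Finset.univ)
    (Ys Xs Rs : Finset (Fin n))
    (hYX : Disjoint Ys Xs) (hYR : Disjoint Ys Rs) (hXR : Disjoint Xs Rs)
    (hcover : Ys ∪ Xs ∪ Rs = Finset.univ)
    (v : (i : Fin n) → D i)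
    (hpos : 0 < (S.marg (Ys ∪ Rs)).eval v) :
    (S.marg Rs).eval v / (S.marg (Ys ∪ Rs)).eval v =
      (∑ w ∈ univ.filter (fun w : (i : Fin n) → D i => ∀ i ∈ Xs ∪ Ys, w i = v i),
          S.eval w) /
      (∑ w ∈ univ.filter (fun w : (i : Fin n) → D i => ∀ i ∈ Xs, w i = v i),
          S.eval w) :=
  spn_conditional_query_general n D S hS hscope Ys Xs Rs hYX hYR hXR hcover v
end
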